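/- Let δ > 0, c₁, c₂ > 0 and ρ₁, ρ₂ ∈ ℝ. Suppose that 2(ρ₁ + ρ₂) + c₁ + c₂ + c₁·exp(−(2ρ₁ + c₁)δ) + c₂·exp(−(2ρ₂ + c₂)δ) < 0. Let λ₁ be the unique root of λ + c₁·exp(δλ) = −2ρ₁ − c₁ and λ₂ the unique root of λ + c₂·exp(δλ) = −2ρ₂ − c₂. Then λ₁ + λ₂ > 0; consequently there exists ρ ∈ ℝ such that ρ + λ₁ > 0 and −ρ + λ₂ > 0. -/

import Mathlib

/-!
Since `c e^{δl} ≥ 0`, a root of `l + c e^{δl} = a` satisfies `l ≤ a`, hence `e^{δl} ≤ e^{δa}` and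
`l ≥ a - c e^{δa}`. Summing this bound for the two roots shows that `l₁ + l₂` exceeds minus the
left-hand side of the hypothesis `hL`.
-/

open Real

lemma sub_mul_exp_le_of_add_mul_exp_eq {c δ l a : ℝ} (hc : 0 ≤ c) (hδ : 0 ≤ δ)
    (h : l + c * exp (δ * l) = a) : a - c * exp (δ * a) ≤ l := by
  have hla : l ≤ a := by
    have := mul_nonneg hc (exp_pos (δ * l)).le
    linarith
  calc a - c * exp (δ * a) ≤ a - c * exp (δ * l) := by gcongr
    _ = l := by linarith

theorem stmt3 (δ c₁ c₂ ρ₁ ρ₂ l₁ l₂ : ℝ)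
    (hδ : 0 < δ) (hc₁ : 0 < c₁) (hc₂ : 0 < c₂)
    (hL : 2 * (ρ₁ + ρ₂) + c₁ + c₂ + c₁ * Real.exp (-(2 * ρ₁ + c₁) * δ)
        + c₂ * Real.exp (-(2 * ρ₂ + c₂) * δ) < 0)
    (h1 : l₁ + c₁ * Real.exp (δ * l₁) = -2 * ρ₁ - c₁)
    (h2 : l₂ + c₂ * Real.exp (δ * l₂) = -2 * ρ₂ - c₂) :
    0 < l₁ + l₂ ∧ ∃ ρ : ℝ, 0 < ρ + l₁ ∧ 0 < -ρ + l₂ := by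
  have hl₁ := sub_mul_exp_le_of_add_mul_exp_eq hc₁.le hδ.le h1
  have hl₂ := sub_mul_exp_le_of_add_mul_exp_eq hc₂.le hδ.le h2
  have e₁ : -(2 * ρ₁ + c₁) * δ = δ * (-2 * ρ₁ - c₁) := by ring
  have e₂ : -(2 * ρ₂ + c₂) * δ = δ * (-2 * ρ₂ - c₂) := by ring
  rw [e₁, e₂] at hL
  have hsum : 0 < l₁ + l₂ := by linarith
  exact ⟨hsum, (l₂ - l₁) / 2, by linarith, by linarith⟩
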